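/- The probabilistic bisector of two equi-range circular objects is unaffected by the presence of a third object: let o₁ = B̄(c₁,r), o₂ = B̄(c₂,r) be closed disks of equal radius r > 0 with distinct centers c₁ ≠ c₂ in the plane, and let o₃ = B̄(c₃,r₃) be any further closed disk with r₃ > 0, the three objects modeled by the triple product measure U(c₁,r) ⊗ U(c₂,r) ⊗ U(c₃,r₃). Then for every point x with dist(x,c₁) = dist(x,c₂), the probability that o₁ is strictly the nearest of the three objects to x equals the probability that o₂ is strictly the nearest of the three objects to x; that is, the product measure of {(u,v,w) | dist(u,x) < dist(v,x) and dist(u,x) < dist(w,x)} equals the product measure of {(u,v,w) | dist(v,x) < dist(u,x) and dist(v,x) < dist(w,x)}. -/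

import Mathlib

/-!
The reflection `σ` of the plane in the line through `x` orthogonal to `c₁ - c₂` (the perpendicular
bisector of `c₁c₂`) fixes `x`, swaps `c₁` and `c₂` and preserves Lebesgue measure, so it carries
`U(c₁, r)` to `U(c₂, r)` and back. Hence `(u, v, w) ↦ (σ v, σ u, w)` preserves the triple product
measure, and it maps the event "`v` is strictly nearest to `x`" onto "`u` is strictly nearest".
-/

open MeasureTheory
open scoped ENNReal

/-- The uniform probability measure on the closed ball of center `c` and radius `r`
in the Euclidean plane. -/
noncomputable def unifBall (c : EuclideanSpace ℝ (Fin 2)) (r : ℝ) :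
    Measure (EuclideanSpace ℝ (Fin 2)) :=
  (volume (Metric.closedBall c r))⁻¹ • volume.restrict (Metric.closedBall c r)

instance (c : EuclideanSpace ℝ (Fin 2)) (r : ℝ) : SFinite (unifBall c r) := by
  unfold unifBall
  infer_instance

theorem exists_isometryEquiv_swap_of_dist_eq {F : Type*} [NormedAddCommGroup F]
    [InnerProductSpace ℝ F] {x c₁ c₂ : F} (h : dist x c₁ = dist x c₂) :
    ∃ σ : F ≃ᵢ F, σ x = x ∧ σ c₁ = c₂ ∧ σ c₂ = c₁ := by
  set R := (ℝ ∙ ((c₁ - x) - (c₂ - x)))ᗮ.reflection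
  have hR : R (c₁ - x) = c₂ - x :=
    Submodule.reflection_sub (by rwa [← dist_eq_norm, ← dist_eq_norm, dist_comm, dist_comm c₂])
  refine ⟨(IsometryEquiv.subRight x).trans (R.toIsometryEquiv.trans (IsometryEquiv.addRight x)),
    ?_, ?_, ?_⟩
  · simp
  · simp [hR]
  · change R (c₂ - x) + x = c₁
    rw [← hR, Submodule.reflection_reflection, sub_add_cancel]

theorem IsometryEquiv.measurePreserving_volume {V : Type*} [NormedAddCommGroup V]
    [InnerProductSpace ℝ V] [FiniteDimensional ℝ V] [MeasurableSpace V] [BorelSpace V]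
    (σ : V ≃ᵢ V) : MeasurePreserving σ volume volume := by
  simpa only [InnerProductSpace.euclideanHausdorffMeasure_eq_volume] using
    σ.measurePreserving_euclideanHausdorffMeasure (Module.finrank ℝ V)

theorem map_unifBall (σ : EuclideanSpace ℝ (Fin 2) ≃ᵢ EuclideanSpace ℝ (Fin 2))
    (c : EuclideanSpace ℝ (Fin 2)) (r : ℝ) :
    (unifBall c r).map σ = unifBall (σ c) r := by
  have hσ := σ.measurePreserving_volume
  have hpre : σ ⁻¹' Metric.closedBall (σ c) r = Metric.closedBall c r := by
    rw [σ.preimage_closedBall, σ.symm_apply_apply]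
  rw [unifBall, unifBall, Measure.map_smul, ← hpre,
    ← Measure.restrict_map hσ.measurable measurableSet_closedBall, hσ.map_eq,
    hσ.measure_preimage measurableSet_closedBall.nullMeasurableSet]

theorem measurePreserving_swap_fst_snd {α β γ : Type*} [MeasurableSpace α] [MeasurableSpace β]
    [MeasurableSpace γ] (μ : Measure α) (ν : Measure β) (ρ : Measure γ) [SFinite μ] [SFinite ν]
    [SFinite ρ] :
    MeasurePreserving (fun p : α × β × γ => (p.2.1, p.1, p.2.2))
      (μ.prod (ν.prod ρ)) (ν.prod (μ.prod ρ)) :=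
  (measurePreserving_prodAssoc ν μ ρ).comp <|
    (Measure.measurePreserving_swap.prod (MeasurePreserving.id ρ)).comp <|
      (measurePreserving_prodAssoc μ ν ρ).symm MeasurableEquiv.prodAssoc

theorem measure_prod_fst_lt_eq_measure_prod_snd_lt {α β : Type*} [MeasurableSpace α]
    [MeasurableSpace β] {μ ν : Measure α} {ρ : Measure β} [SFinite μ] [SFinite ν] [SFinite ρ]
    {f : α → ℝ} {g : β → ℝ} (hf : Measurable f) (hg : Measurable g) {σ : α → α}
    (hfσ : ∀ y, f (σ y) = f y) (hμν : MeasurePreserving σ μ ν) (hνμ : MeasurePreserving σ ν μ) :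
    (μ.prod (ν.prod ρ)) {p | f p.1 < f p.2.1 ∧ f p.1 < g p.2.2}
      = (μ.prod (ν.prod ρ)) {p | f p.2.1 < f p.1 ∧ f p.2.1 < g p.2.2} := by
  have hT : MeasurePreserving (fun p : α × α × β => (σ p.2.1, σ p.1, p.2.2))
      (μ.prod (ν.prod ρ)) (μ.prod (ν.prod ρ)) :=
    (hνμ.prod (hμν.prod (MeasurePreserving.id ρ))).comp (measurePreserving_swap_fst_snd μ ν ρ)
  have hmeas : MeasurableSet {p : α × α × β | f p.1 < f p.2.1 ∧ f p.1 < g p.2.2} :=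
    (measurableSet_lt (hf.comp measurable_fst) (hf.comp measurable_snd.fst)).inter
      (measurableSet_lt (hf.comp measurable_fst) (hg.comp measurable_snd.snd))
  rw [← hT.measure_preimage hmeas.nullMeasurableSet]
  simp only [Set.preimage_ofPred_eq, hfσ]

theorem prob_bisector_equi_range_disks_unaffected_by_third_object_general
    (c₁ c₂ c₃ : EuclideanSpace ℝ (Fin 2)) (r r₃ : ℝ)
    (x : EuclideanSpace ℝ (Fin 2)) (hx : dist x c₁ = dist x c₂) :
    ((unifBall c₁ r).prod ((unifBall c₂ r).prod (unifBall c₃ r₃)))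
        {p : EuclideanSpace ℝ (Fin 2) ×
            (EuclideanSpace ℝ (Fin 2) × EuclideanSpace ℝ (Fin 2)) |
          dist p.1 x < dist p.2.1 x ∧ dist p.1 x < dist p.2.2 x}
      = ((unifBall c₁ r).prod ((unifBall c₂ r).prod (unifBall c₃ r₃)))
          {p : EuclideanSpace ℝ (Fin 2) ×
              (EuclideanSpace ℝ (Fin 2) × EuclideanSpace ℝ (Fin 2)) |
            dist p.2.1 x < dist p.1 x ∧ dist p.2.1 x < dist p.2.2 x} := by
  obtain ⟨σ, hσx, hσ₁, hσ₂⟩ := exists_isometryEquiv_swap_of_dist_eq hx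
  have hdist : Measurable (dist · x) := measurable_id.dist measurable_const
  have hσ_dist (y) : dist (σ y) x = dist y x := by rw [← σ.dist_eq y x, hσx]
  exact measure_prod_fst_lt_eq_measure_prod_snd_lt hdist hdist hσ_dist
    ⟨σ.continuous.measurable, by rw [map_unifBall, hσ₁]⟩
    ⟨σ.continuous.measurable, by rw [map_unifBall, hσ₂]⟩

theorem prob_bisector_equi_range_disks_unaffected_by_third_object
    (c₁ c₂ c₃ : EuclideanSpace ℝ (Fin 2)) (r r₃ : ℝ)
    (hr : 0 < r) (hr₃ : 0 < r₃) (hc : c₁ ≠ c₂)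
    (x : EuclideanSpace ℝ (Fin 2)) (hx : dist x c₁ = dist x c₂) :
    ((unifBall c₁ r).prod ((unifBall c₂ r).prod (unifBall c₃ r₃)))
        {p : EuclideanSpace ℝ (Fin 2) ×
            (EuclideanSpace ℝ (Fin 2) × EuclideanSpace ℝ (Fin 2)) |
          dist p.1 x < dist p.2.1 x ∧ dist p.1 x < dist p.2.2 x}
      = ((unifBall c₁ r).prod ((unifBall c₂ r).prod (unifBall c₃ r₃)))
          {p : EuclideanSpace ℝ (Fin 2) ×
              (EuclideanSpace ℝ (Fin 2) × EuclideanSpace ℝ (Fin 2)) |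
            dist p.2.1 x < dist p.1 x ∧ dist p.2.1 x < dist p.2.2 x} :=
  prob_bisector_equi_range_disks_unaffected_by_third_object_general c₁ c₂ c₃ r r₃ x hx
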